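/- Let a ≥ n ≥ 0 be integers and let d be a type-C partition of size 2n+2a with exactly 2a parts. Then: (i) ∇(d) is a type-D partition of size 2n; (ii) the B-collapse of d^+ has exactly 2a+1 parts; and (iii) ∇(B-collapse of d^+) equals the C-collapse of ((∇(d))^+)^-. -/

import Mathlib

/-!
Partitions (Young diagrams) are represented as antitone, eventually-zero
functions `f : ℕ → ℕ`, where `f i` is the length of the `(i+1)`-st row.
-/

/-- `f : ℕ → ℕ` represents a partition (Young diagram). -/
def IsPartition (f : ℕ → ℕ) : Prop :=
  Antitone f ∧ ∃ N, ∀ i, N ≤ i → f i = 0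

/-- The size of a partition: the sum of its parts. -/
noncomputable def size (f : ℕ → ℕ) : ℕ := ∑' i, f i

/-- The sum of the `k` largest parts of a partition. -/
def psum (f : ℕ → ℕ) (k : ℕ) : ℕ := ∑ i ∈ Finset.range k, f i

/-- The multiplicity with which `p` occurs as a part. -/
noncomputable def mult (f : ℕ → ℕ) (p : ℕ) : ℕ := {i | f i = p}.ncard

/-- The transpose (conjugate) partition: `transpose f i` is the length of the
`(i+1)`-st column of `f`. -/
noncomputable def transpose (f : ℕ → ℕ) : ℕ → ℕ := fun i => {j | i < f j}.ncard

/-- The number of parts of a partition (the length of its first column). -/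
noncomputable def numParts (f : ℕ → ℕ) : ℕ := {j | 0 < f j}.ncard

/-- Type B: odd size, and every (positive) even part occurs with even multiplicity. -/
def IsTypeB (f : ℕ → ℕ) : Prop :=
  IsPartition f ∧ Odd (size f) ∧ ∀ p, 0 < p → Even p → Even (mult f p)

/-- Type C: even size, and every odd part occurs with even multiplicity. -/
def IsTypeC (f : ℕ → ℕ) : Prop :=
  IsPartition f ∧ Even (size f) ∧ ∀ p, Odd p → Even (mult f p)

/-- Type D: even size, and every (positive) even part occurs with even multiplicity. -/
def IsTypeD (f : ℕ → ℕ) : Prop :=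
  IsPartition f ∧ Even (size f) ∧ ∀ p, 0 < p → Even p → Even (mult f p)

/-- Dominance order `f ≼ g` between partitions of the same size. -/
def Dom (f g : ℕ → ℕ) : Prop :=
  size f = size g ∧ ∀ k, psum f k ≤ psum g k

/-- `c` is the X-collapse of `d`, where predicate `T` expresses "type X": `c` is
the greatest type-X partition of the same size dominated by `d`. -/
def IsCollapse (T : (ℕ → ℕ) → Prop) (d c : ℕ → ℕ) : Prop :=
  T c ∧ Dom c d ∧ ∀ e, T e → Dom e d → Dom e c

open Classical in
/-- The X-collapse of `d` (junk value if it does not exist). -/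
noncomputable def collapse (T : (ℕ → ℕ) → Prop) (d : ℕ → ℕ) : ℕ → ℕ :=
  if h : ∃ c, IsCollapse T d c then h.choose else fun _ => 0

/-- The B-collapse. -/
noncomputable def collapseB : (ℕ → ℕ) → ℕ → ℕ := collapse IsTypeB

/-- The C-collapse. -/
noncomputable def collapseC : (ℕ → ℕ) → ℕ → ℕ := collapse IsTypeC

/-- The D-collapse. -/
noncomputable def collapseD : (ℕ → ℕ) → ℕ → ℕ := collapse IsTypeD

/-- `d⁺`: add one box to the first row. -/
def boxPlus (f : ℕ → ℕ) : ℕ → ℕ := fun i => if i = 0 then f 0 + 1 else f i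

/-- `d⁻`: remove one box from the last row (for nonempty `d`). -/
noncomputable def boxMinus (f : ℕ → ℕ) : ℕ → ℕ :=
  fun i => if i = numParts f - 1 then f i - 1 else f i

/-- `∇(d)`: remove the first column (every part decreased by 1). -/
def delCol (f : ℕ → ℕ) : ℕ → ℕ := fun i => f i - 1

/-- `∇̌(d)`: remove the first row (delete one largest part). -/
def delRow (f : ℕ → ℕ) : ℕ → ℕ := fun i => f (i + 1)

/-- The metaplectic Lusztig–Spaltenstein map: the D-collapse of the transpose. -/
noncomputable def mLS (d : ℕ → ℕ) : ℕ → ℕ := collapseD (transpose d)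

/-- The map `d̃_SP`: the C-collapse of `(e⁺)⁻`. -/
noncomputable def mSP (e : ℕ → ℕ) : ℕ → ℕ := collapseC (boxMinus (boxPlus e))

/-- The metaplectic Barbasch–Vogan duality. -/
noncomputable def mBV (d : ℕ → ℕ) : ℕ → ℕ := mSP (mLS d)

/-!
Write `E = ∇d`, `M = (E⁺)⁻`, let `g` be the C-collapse of `M` and `β` the B-collapse of `d⁺`.
Since `g` has at most `|g| = 2n ≤ 2a` rows, adding a column of height `2a + 1` to `g` gives a
type-B partition `g'` dominated by `d⁺`, hence by `β`. Comparing numbers of rows along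
`g' ≼ β ≼ d⁺`, and using that a type-B partition has an odd number of rows, `β` has exactly
`2a + 1` rows. So `∇β` is of type C; it is dominated by `M`, hence `∇β ≼ g`, and `g ≼ ∇β`
follows from `g' ≼ β` by removing the added column again.

The collapses exist: the C-collapse is reached by repeatedly moving single boxes down, and the
B-collapse of `μ` is the C-collapse of `μ` with a column of height `|μ|` added, with that column
removed again.
-/

open Filter

lemma psum_succ (f : ℕ → ℕ) (k : ℕ) : psum f (k + 1) = psum f k + f k :=
  Finset.sum_range_succ f k

lemma psum_zero (f : ℕ → ℕ) : psum f 0 = 0 := rfl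

lemma psum_mono (f : ℕ → ℕ) : Monotone (psum f) := fun _ _ h =>
  Finset.sum_le_sum_of_subset (Finset.range_subset_range.2 h)

lemma psum_add_sum_Ico (f : ℕ → ℕ) {k m : ℕ} (h : k ≤ m) :
    psum f k + ∑ i ∈ Finset.Ico k m, f i = psum f m :=
  Finset.sum_range_add_sum_Ico f h

lemma psum_add_le_of_one_le {f : ℕ → ℕ} {k m : ℕ} (hkm : k ≤ m)
    (h : ∀ i, k ≤ i → i < m → 1 ≤ f i) : psum f k + (m - k) ≤ psum f m := by
  have : m - k ≤ ∑ i ∈ Finset.Ico k m, f i := by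
    simpa using Finset.card_nsmul_le_sum (Finset.Ico k m) f 1 fun i hi =>
      h i (Finset.mem_Ico.1 hi).1 (Finset.mem_Ico.1 hi).2
  rw [← psum_add_sum_Ico f hkm]
  omega

lemma psum_add_eq_of_eq_one {f : ℕ → ℕ} {k m : ℕ} (hkm : k ≤ m)
    (h : ∀ i, k ≤ i → i < m → f i = 1) : psum f k + (m - k) = psum f m := by
  rw [← psum_add_sum_Ico f hkm, Finset.sum_congr rfl fun i hi =>
    h i (Finset.mem_Ico.1 hi).1 (Finset.mem_Ico.1 hi).2]
  simp

lemma size_eq_psum {f : ℕ → ℕ} {N : ℕ} (h : ∀ i, N ≤ i → f i = 0) : size f = psum f N :=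
  tsum_eq_sum fun i hi => h i (by simpa using hi)

lemma numParts_eq {f : ℕ → ℕ} {m : ℕ} (h : ∀ i, i < m ↔ 0 < f i) : numParts f = m := by
  have : {j | 0 < f j} = ↑(Finset.range m) := by ext i; simp [h]
  rw [numParts, this, Set.ncard_coe_finset, Finset.card_range]

namespace IsPartition

variable {f g : ℕ → ℕ}

lemma exists_lt_iff_le (hf : IsPartition f) {t : ℕ} (ht : 0 < t) :
    ∃ J, ∀ i, i < J ↔ t ≤ f i := by
  classical
  have hex : ∃ i, f i < t := by
    obtain ⟨N, hN⟩ := hf.2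
    exact ⟨N, by rw [hN N le_rfl]; exact ht⟩
  refine ⟨Nat.find hex, fun i => ⟨fun hi => not_lt.1 (Nat.find_min hex hi), fun hi => ?_⟩⟩
  by_contra h
  have := hf.1 (not_lt.1 h)
  have := Nat.find_spec hex
  omega

lemma lt_numParts_iff (hf : IsPartition f) {i : ℕ} : i < numParts f ↔ 0 < f i := by
  obtain ⟨J, hJ⟩ := hf.exists_lt_iff_le one_pos
  rw [numParts_eq hJ]
  exact hJ i

lemma eq_zero_of_numParts_le (hf : IsPartition f) {i : ℕ} (h : numParts f ≤ i) : f i = 0 := by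
  have := mt (hf.lt_numParts_iff (i := i)).2
  omega

lemma psum_eq_size (hf : IsPartition f) {k : ℕ} (hk : numParts f ≤ k) : psum f k = size f :=
  (size_eq_psum fun _ hi => hf.eq_zero_of_numParts_le (hk.trans hi)).symm

lemma psum_le_size (hf : IsPartition f) (k : ℕ) : psum f k ≤ size f := by
  rw [← hf.psum_eq_size (le_max_right k (numParts f))]
  exact psum_mono f (le_max_left _ _)

lemma min_le_psum (hf : IsPartition f) (k : ℕ) : min k (size f) ≤ psum f k := by
  rcases le_total k (numParts f) with h | h
  · have := psum_add_le_of_one_le (f := f) (Nat.zero_le k) fun i _ hi =>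
      hf.lt_numParts_iff.1 (lt_of_lt_of_le hi h)
    rw [psum_zero] at this
    omega
  · rw [hf.psum_eq_size h]
    exact min_le_right _ _

lemma numParts_le_size (hf : IsPartition f) : numParts f ≤ size f := by
  have := psum_add_le_of_one_le (f := f) (Nat.zero_le (numParts f)) fun _ _ hi =>
    hf.lt_numParts_iff.1 hi
  rw [psum_zero, hf.psum_eq_size le_rfl] at this
  omega

lemma eventually_psum_eq_size (hf : IsPartition f) : ∀ᶠ k in atTop, psum f k = size f :=
  eventually_atTop.2 ⟨numParts f, fun _ hk => hf.psum_eq_size hk⟩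

lemma size_add_eq_of_eventually (hf : IsPartition f) (hg : IsPartition g) {x y : ℕ}
    (h : ∀ᶠ k in atTop, psum f k + x = psum g k + y) : size f + x = size g + y := by
  obtain ⟨k, h1, h2, h3⟩ :=
    (hf.eventually_psum_eq_size.and (hg.eventually_psum_eq_size.and h)).exists
  omega

end IsPartition

namespace Dom

variable {f g h : ℕ → ℕ}

lemma refl (f : ℕ → ℕ) : Dom f f := ⟨rfl, fun _ => le_rfl⟩

lemma trans (h₁ : Dom f g) (h₂ : Dom g h) : Dom f h :=
  ⟨h₁.1.trans h₂.1, fun k => (h₁.2 k).trans (h₂.2 k)⟩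

lemma antisymm (h₁ : Dom f g) (h₂ : Dom g f) : f = g := by
  funext k
  have e1 := le_antisymm (h₁.2 k) (h₂.2 k)
  have e2 := le_antisymm (h₁.2 (k + 1)) (h₂.2 (k + 1))
  rw [psum_succ, psum_succ] at e2
  omega

lemma numParts_le (h : Dom f g) (hf : IsPartition f) (hg : IsPartition g) :
    numParts g ≤ numParts f := by
  have h1 := h.2 (numParts f)
  have h2 := hf.psum_eq_size le_rfl
  have h3 := hg.psum_le_size (numParts f + 1)
  have h4 := psum_succ g (numParts f)
  have h5 := h.1
  have : ¬ 0 < g (numParts f) := by omega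
  exact not_lt.1 (mt hg.lt_numParts_iff.1 this)

end Dom

lemma exists_eq_of_mult_ne_zero {f : ℕ → ℕ} {p : ℕ} (h : mult f p ≠ 0) : ∃ i, f i = p :=
  Set.nonempty_of_ncard_ne_zero h

lemma mult_delCol (f : ℕ → ℕ) {p : ℕ} (hp : 0 < p) : mult (delCol f) p = mult f (p + 1) := by
  unfold mult delCol
  congr 1
  ext i
  simp only [Set.mem_ofPred_eq]
  omega

section Parity

variable {f : ℕ → ℕ}

lemma psum_eq_sum_mult (hf : Antitone f) {J t : ℕ} (hJ : ∀ i, i < J ↔ t ≤ f i) :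
    psum f J = ∑ b ∈ Finset.Icc t (f 0), mult f b * b := by
  have hmaps : ∀ i ∈ Finset.range J, f i ∈ Finset.Icc t (f 0) := fun i hi =>
    Finset.mem_Icc.2 ⟨(hJ i).1 (Finset.mem_range.1 hi), hf (Nat.zero_le i)⟩
  rw [psum, ← Finset.sum_fiberwise_of_maps_to hmaps]
  refine Finset.sum_congr rfl fun b hb => ?_
  have hfiber : {i | f i = b} = ↑((Finset.range J).filter fun i => f i = b) := by
    ext i
    simp only [Set.mem_ofPred_eq, Finset.coe_filter, Finset.mem_range]
    exact ⟨fun h => ⟨(hJ i).2 (h ▸ (Finset.mem_Icc.1 hb).1), h⟩, And.right⟩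
  rw [mult, hfiber, Set.ncard_coe_finset, Finset.sum_congr rfl fun i hi =>
    (Finset.mem_filter.1 hi).2, Finset.sum_const, smul_eq_mul]

lemma even_psum_of_even_mult (hf : Antitone f) (hC : ∀ p, Odd p → Even (mult f p))
    {J t : ℕ} (hJ : ∀ i, i < J ↔ t ≤ f i) : Even (psum f J) := by
  rw [psum_eq_sum_mult hf hJ]
  refine Finset.even_sum _ fun b _ => ?_
  rcases Nat.even_or_odd b with hb | hb
  · exact hb.mul_left _
  · exact (hC b hb).mul_right _

lemma IsPartition.even_size_of_even_mult (hf : IsPartition f)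
    (hC : ∀ p, Odd p → Even (mult f p)) : Even (size f) := by
  rw [← hf.psum_eq_size le_rfl]
  exact even_psum_of_even_mult hf.1 hC fun _ => hf.lt_numParts_iff

lemma even_psum_of_lt_pred (hf : Antitone f) (hC : ∀ p, Odd p → Even (mult f p)) {k : ℕ}
    (hk : 0 < k) (h : f k < f (k - 1)) : Even (psum f k) := by
  refine even_psum_of_even_mult hf hC (t := f (k - 1)) fun i => ⟨fun hi => hf (by omega),
    fun hi => ?_⟩
  by_contra hik
  have := hf (not_lt.1 hik)
  omega

lemma odd_psum_of_max_odd_mult (hf : Antitone f) {J v : ℕ} (hJ : ∀ i, i < J ↔ v ≤ f i)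
    (hv : Odd v) (hvm : Odd (mult f v)) (hmax : ∀ p, v < p → Odd p → Even (mult f p)) :
    Odd (psum f J) := by
  obtain ⟨i, hi⟩ := exists_eq_of_mult_ne_zero hvm.pos.ne'
  have hmem : v ∈ Finset.Icc v (f 0) := Finset.mem_Icc.2 ⟨le_rfl, hi ▸ hf (Nat.zero_le i)⟩
  rw [psum_eq_sum_mult hf hJ, ← Finset.add_sum_erase _ _ hmem]
  refine (hvm.mul hv).add_even (Finset.even_sum _ fun b hb => ?_)
  obtain ⟨hbv, hb⟩ := Finset.mem_erase.1 hb
  rcases Nat.even_or_odd b with hb' | hb'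
  · exact hb'.mul_left _
  · exact (hmax b (lt_of_le_of_ne (Finset.mem_Icc.1 hb).1 (Ne.symm hbv)) hb').mul_right _

lemma exists_max_odd_mult (hf : Antitone f) (h : ¬ ∀ p, Odd p → Even (mult f p)) :
    ∃ v, Odd v ∧ Odd (mult f v) ∧ ∀ p, v < p → Odd p → Even (mult f p) := by
  classical
  have hbound : ∀ p, Odd (mult f p) → p ≤ f 0 := fun p hp => by
    obtain ⟨i, hi⟩ := exists_eq_of_mult_ne_zero hp.pos.ne'
    exact hi ▸ hf (Nat.zero_le i)
  push Not at h
  obtain ⟨p, hp, hpm⟩ := h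
  rw [Nat.not_even_iff_odd] at hpm
  set P := fun p => Odd p ∧ Odd (mult f p)
  have hspec : P (Nat.findGreatest P (f 0)) := Nat.findGreatest_spec (hbound p hpm) ⟨hp, hpm⟩
  refine ⟨_, hspec.1, hspec.2, fun q hq hqo => ?_⟩
  rw [← Nat.not_odd_iff_even]
  intro hqm
  exact Nat.findGreatest_is_greatest hq (hbound q hqm) ⟨hqo, hqm⟩

end Parity

def addCol (H : ℕ) (f : ℕ → ℕ) : ℕ → ℕ := fun i => if i < H then f i + 1 else f i

section Columns

variable {f g : ℕ → ℕ} {H : ℕ}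

lemma isPartition_delCol (hf : IsPartition f) : IsPartition (delCol f) := by
  obtain ⟨N, hN⟩ := hf.2
  exact ⟨fun _ _ h => Nat.sub_le_sub_right (hf.1 h) 1, N, fun i hi => by simp [delCol, hN i hi]⟩

lemma isPartition_addCol (hf : IsPartition f) : IsPartition (addCol H f) := by
  obtain ⟨N, hN⟩ := hf.2
  refine ⟨antitone_nat_of_succ_le fun i => ?_, max N H, fun i hi => ?_⟩
  · have := hf.1 (Nat.le_add_right i 1)
    simp only [addCol]
    split_ifs <;> omega
  · simp only [addCol, if_neg (by omega : ¬ i < H)]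
    exact hN i (by omega)

lemma psum_addCol (H : ℕ) (f : ℕ → ℕ) (k : ℕ) : psum (addCol H f) k = psum f k + min k H := by
  induction k with
  | zero => rfl
  | succ k ih =>
    rw [psum_succ, psum_succ, ih]
    simp only [addCol]
    split_ifs <;> omega

lemma size_addCol (hf : IsPartition f) : size (addCol H f) = size f + H := by
  refine (isPartition_addCol hf).size_add_eq_of_eventually (x := 0) hf ?_
  filter_upwards [eventually_ge_atTop H] with k hk
  rw [psum_addCol]
  omega

lemma numParts_addCol (hf : IsPartition f) (hH : numParts f ≤ H) : numParts (addCol H f) = H :=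
  numParts_eq fun i => by
    have := mt (hf.lt_numParts_iff (i := i)).2
    simp only [addCol]
    split_ifs <;> omega

lemma addCol_delCol (hf : IsPartition f) : addCol (numParts f) (delCol f) = f := by
  funext i
  have h1 := (hf.lt_numParts_iff (i := i)).1
  have h2 := mt (hf.lt_numParts_iff (i := i)).2
  simp only [addCol, delCol]
  split_ifs <;> omega

lemma psum_delCol (hf : IsPartition f) (k : ℕ) :
    psum (delCol f) k + min k (numParts f) = psum f k := by
  rw [← psum_addCol, addCol_delCol hf]

lemma size_delCol (hf : IsPartition f) : size (delCol f) + numParts f = size f := by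
  rw [← size_addCol (isPartition_delCol hf), addCol_delCol hf]

lemma mult_addCol (hf : IsPartition f) (hH : numParts f ≤ H) {q : ℕ} (hq : 2 ≤ q) :
    mult (addCol H f) q = mult f (q - 1) := by
  unfold mult addCol
  congr 1
  ext i
  have := mt (hf.lt_numParts_iff (i := i)).2
  simp only [Set.mem_ofPred_eq]
  split_ifs <;> omega

lemma mult_addCol_one (hf : IsPartition f) (hH : numParts f ≤ H) :
    mult (addCol H f) 1 = H - numParts f := by
  have : {i | addCol H f i = 1} = ↑(Finset.Ico (numParts f) H) := by
    ext i
    have h1 := (hf.lt_numParts_iff (i := i)).1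
    have h2 := mt (hf.lt_numParts_iff (i := i)).2
    simp only [addCol, Set.mem_ofPred_eq, Finset.coe_Ico, Set.mem_Ico]
    split_ifs <;> omega
  rw [mult, this, Set.ncard_coe_finset, Nat.card_Ico]

lemma dom_addCol_iff (hf : IsPartition f) (hg : IsPartition g) :
    Dom (addCol H f) (addCol H g) ↔ Dom f g := by
  simp only [Dom, size_addCol hf, size_addCol hg, psum_addCol, Nat.add_right_cancel_iff,
    Nat.add_le_add_iff_right]

lemma IsPartition.even_size_delCol (hf : IsPartition f)
    (hB : ∀ p, 0 < p → Even p → Even (mult f p)) : Even (size (delCol f)) :=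
  (isPartition_delCol hf).even_size_of_even_mult fun p hp => by
    rw [mult_delCol f hp.pos]
    exact hB _ (Nat.succ_pos p) hp.add_one

lemma IsTypeB.odd_numParts (h : IsTypeB f) : Odd (numParts f) := by
  have h1 := size_delCol h.1
  have h2 := Nat.even_iff.1 (h.1.even_size_delCol h.2.2)
  have h3 := Nat.odd_iff.1 h.2.1
  rw [Nat.odd_iff]
  omega

lemma IsTypeB.isTypeC_delCol (h : IsTypeB f) : IsTypeC (delCol f) :=
  ⟨isPartition_delCol h.1, h.1.even_size_delCol h.2.2, fun p hp => by
    rw [mult_delCol f hp.pos]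
    exact h.2.2 _ (Nat.succ_pos p) hp.add_one⟩

lemma IsTypeC.isTypeB_delCol (h : IsTypeC f) (hodd : Odd (numParts f)) :
    IsTypeB (delCol f) := by
  refine ⟨isPartition_delCol h.1, ?_, fun p hp hpe => ?_⟩
  · have h1 := size_delCol h.1
    have h2 := Nat.even_iff.1 h.2.1
    have h3 := Nat.odd_iff.1 hodd
    rw [Nat.odd_iff]
    omega
  · rw [mult_delCol f hp]
    exact h.2.2 _ hpe.add_one

lemma IsTypeC.isTypeD_delCol (h : IsTypeC f) (heven : Even (numParts f)) :
    IsTypeD (delCol f) := by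
  refine ⟨isPartition_delCol h.1, ?_, fun p hp hpe => ?_⟩
  · have h1 := size_delCol h.1
    have h2 := Nat.even_iff.1 h.2.1
    have h3 := Nat.even_iff.1 heven
    rw [Nat.even_iff]
    omega
  · rw [mult_delCol f hp]
    exact h.2.2 _ hpe.add_one

lemma IsTypeC.isTypeB_addCol (h : IsTypeC f) (hH : numParts f ≤ H) (hodd : Odd H) :
    IsTypeB (addCol H f) := by
  refine ⟨isPartition_addCol h.1, ?_, fun q hq hqe => ?_⟩
  · rw [size_addCol h.1]
    exact h.2.1.add_odd hodd
  · obtain ⟨r, hr⟩ := hqe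
    rw [mult_addCol h.1 hH (by omega)]
    exact h.2.2 _ ⟨r - 1, by omega⟩

lemma IsTypeB.isTypeC_addCol (h : IsTypeB f) (hH : numParts f ≤ H) (hodd : Odd H) :
    IsTypeC (addCol H f) := by
  refine ⟨isPartition_addCol h.1, ?_, fun q hq => ?_⟩
  · rw [size_addCol h.1]
    exact h.2.1.add_odd hodd
  · obtain ⟨r, hr⟩ := hq
    rcases Nat.eq_zero_or_pos r with rfl | hr0
    · rw [hr, mul_zero, zero_add, mult_addCol_one h.1 hH, Nat.even_iff]
      have h1 := Nat.odd_iff.1 h.odd_numParts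
      have h2 := Nat.odd_iff.1 hodd
      omega
    · rw [mult_addCol h.1 hH (by omega)]
      exact h.2.2 _ (by omega) ⟨r, by omega⟩

end Columns

def moveBox (i j : ℕ) (f : ℕ → ℕ) : ℕ → ℕ :=
  fun k => if k = i then f k - 1 else if k = j then f k + 1 else f k

section MoveBox

variable {f : ℕ → ℕ} {i j : ℕ}

lemma psum_moveBox (hij : i < j) (hi : 0 < f i) (k : ℕ) :
    psum (moveBox i j f) k + (if i < k ∧ k ≤ j then 1 else 0) = psum f k := by
  induction k with
  | zero => simp [psum_zero]
  | succ k ih =>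
    rw [psum_succ, psum_succ]
    simp only [moveBox]
    split_ifs at ih ⊢ <;> subst_vars <;> omega

lemma isPartition_moveBox (hf : IsPartition f) (hij : i < j) (h₁ : f (i + 1) < f i)
    (h₂ : f j < f (j - 1)) (h₃ : f j + 2 ≤ f i) : IsPartition (moveBox i j f) := by
  obtain ⟨N, hN⟩ := hf.2
  refine ⟨antitone_nat_of_succ_le fun m => ?_, max N (j + 1), fun k hk => ?_⟩
  · have := hf.1 (Nat.le_add_right m 1)
    simp only [moveBox]
    split_ifs <;> subst_vars <;> (try simp only [Nat.add_sub_cancel] at *) <;> omega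
  · simp only [moveBox, if_neg (by omega : k ≠ i), if_neg (by omega : k ≠ j)]
    exact hN k (by omega)

lemma size_moveBox (hf : IsPartition f) (hij : i < j) (hi : 0 < f i) :
    size (moveBox i j f) = size f := by
  obtain ⟨N, hN⟩ := hf.2
  have hz : ∀ k, max N (j + 1) ≤ k → moveBox i j f k = 0 := fun k hk => by
    simp only [moveBox, if_neg (by omega : k ≠ i), if_neg (by omega : k ≠ j)]
    exact hN k (by omega)
  have h := psum_moveBox hij hi (max N (j + 1))
  rw [if_neg (by omega), add_zero] at h
  rw [size_eq_psum hz, h, size_eq_psum (N := max N (j + 1)) fun k hk => hN k (by omega)]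

end MoveBox

/-- An equality `psum c k = psum μ k` inside the window would either end a block of `c` at an
odd partial sum, or propagate to `k + 1`, and finally to `R`, where `μ` drops below `w`. -/
lemma psum_lt_of_odd_window {c μ : ℕ → ℕ} (hc : Antitone c) (hC : ∀ p, Odd p → Even (mult c p))
    (hdom : ∀ k, psum c k ≤ psum μ k) {J R w : ℕ} (hge : ∀ i, i < R → w ≤ μ i)
    (hle : ∀ i, J ≤ i → μ i ≤ w) (hR : μ R < w)
    (hodd : ∀ k, J ≤ k → k ≤ R → Odd (psum μ k)) {k : ℕ} (hJk : J ≤ k) (hkR : k ≤ R) :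
    psum c k < psum μ k := by
  have key : ∀ k, J ≤ k → k ≤ R → psum c k = psum μ k → w ≤ c k ∧ c k ≤ μ k := by
    intro k hJk hkR heq
    have hk : 0 < k := Nat.pos_of_ne_zero fun h => by
      simpa [h, psum_zero] using hodd k hJk hkR
    have h₁ := hdom (k + 1)
    have h₂ := hdom (k - 1)
    have h₃ : ¬ c k < c (k - 1) := fun hlt =>
      Nat.not_even_iff_odd.2 (hodd k hJk hkR) (heq ▸ even_psum_of_lt_pred hc hC hk hlt)
    have h₄ := hge (k - 1) (by omega)
    have e := psum_succ c (k - 1)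
    have e' := psum_succ μ (k - 1)
    rw [Nat.sub_add_cancel hk] at e e'
    rw [psum_succ, psum_succ] at h₁
    omega
  refine Nat.decreasingInduction (motive := fun k _ => J ≤ k → psum c k < psum μ k)
    (fun k hk ih hJk => lt_of_le_of_ne (hdom k) fun heq => ?_)
    (fun hJR => lt_of_le_of_ne (hdom R) fun heq => ?_) hkR hJk
  · have h₁ := key k hJk hk.le heq
    have h₂ := hle k hJk
    have h₃ := hge k hk
    have h₄ := ih (by omega)
    rw [psum_succ, psum_succ] at h₄
    omega
  · have := key R hJR le_rfl heq
    omega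

/-- The witness moves a box from the last row longer than `w` to the first row shorter than `w`;
the rows in between have the even length `w`, so the partial sums of `μ` stay odd along them. -/
lemma IsPartition.exists_dom_step_of_odd_psum {μ : ℕ → ℕ} (hμ : IsPartition μ) {J w : ℕ}
    (hJ : ∀ i, i < J ↔ w < μ i) (hw : Even w) (hw₀ : 0 < w) (hoddJ : Odd (psum μ J)) :
    ∃ μ', IsPartition μ' ∧ Dom μ' μ ∧ (∃ k ≤ size μ, psum μ' k < psum μ k) ∧
      ∀ e, IsTypeC e → Dom e μ → Dom e μ' := by
  obtain ⟨R, hR⟩ := hμ.exists_lt_iff_le hw₀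
  have hJ₀ : 0 < J := Nat.pos_of_ne_zero fun h => by simp [h, psum_zero] at hoddJ
  have hμJ : w < μ (J - 1) := (hJ _).1 (by omega)
  have hμR : μ R < w := not_le.1 (mt (hR R).2 (lt_irrefl R))
  have hJR : J ≤ R := not_lt.1 fun h => by
    have := (hJ R).1 h
    omega
  have hwin : ∀ k, J ≤ k → k ≤ R → Odd (psum μ k) := fun k hJk hkR => by
    have hconst : ∀ i ∈ Finset.Ico J k, μ i = w := fun i hi => by
      obtain ⟨h₁, h₂⟩ := Finset.mem_Ico.1 hi
      have := (hR i).1 (by omega)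
      have := mt (hJ i).2 (not_lt.2 h₁)
      omega
    rw [← psum_add_sum_Ico μ hJk, Finset.sum_congr rfl hconst, Finset.sum_const, smul_eq_mul]
    exact hoddJ.add_even (hw.mul_left _)
  have hpsum := psum_moveBox (f := μ) (i := J - 1) (j := R) (by omega) (by omega)
  have hμ' : IsPartition (moveBox (J - 1) R μ) := by
    refine isPartition_moveBox hμ (by omega) ?_ ?_ (by omega)
    · rw [Nat.sub_add_cancel hJ₀]
      exact (not_lt.1 (mt (hJ J).2 (lt_irrefl J))).trans_lt hμJ
    · exact hμR.trans_le ((hR (R - 1)).1 (by omega))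
  have hsize := size_moveBox hμ (i := J - 1) (j := R) (by omega) (by omega)
  refine ⟨_, hμ', ⟨hsize, fun k => ?_⟩, ⟨J, ?_, ?_⟩, fun e he hdom =>
    ⟨hdom.1.trans hsize.symm, fun k => ?_⟩⟩
  · have := hpsum k
    omega
  · have := hμ.lt_numParts_iff.2 (by omega : 0 < μ (J - 1))
    have := hμ.numParts_le_size
    omega
  · have := hpsum J
    rw [if_pos (by omega)] at this
    omega
  · have h := hpsum k
    have := hdom.2 k
    split_ifs at h with hk
    · have := psum_lt_of_odd_window he.1.1 he.2.2 hdom.2 (fun i hi => (hR i).1 hi)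
        (fun i hi => not_lt.1 (mt (hJ i).2 (not_lt.2 hi))) hμR hwin (by omega) hk.2
      omega
    · omega

lemma IsPartition.exists_dom_step {μ : ℕ → ℕ} (hμ : IsPartition μ) (hsz : Even (size μ))
    (hC : ¬ ∀ p, Odd p → Even (mult μ p)) :
    ∃ μ', IsPartition μ' ∧ Dom μ' μ ∧ (∃ k ≤ size μ, psum μ' k < psum μ k) ∧
      ∀ e, IsTypeC e → Dom e μ → Dom e μ' := by
  obtain ⟨v, hv, hvm, hmax⟩ := exists_max_odd_mult hμ.1 hC
  obtain ⟨J, hJ⟩ := hμ.exists_lt_iff_le hv.pos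
  have hoddJ := odd_psum_of_max_odd_mult hμ.1 hJ hv hvm hmax
  have hv₁ : v ≠ 1 := by
    rintro rfl
    rw [← numParts_eq hJ, hμ.psum_eq_size le_rfl] at hoddJ
    exact Nat.not_even_iff_odd.2 hoddJ hsz
  have hv₀ := hv.pos
  refine hμ.exists_dom_step_of_odd_psum (w := v - 1) (J := J) (fun i => ?_)
    (Nat.Odd.sub_odd hv odd_one) (by omega) hoddJ
  rw [hJ i]
  omega

lemma IsCollapse.of_dom {T : (ℕ → ℕ) → Prop} {μ μ' c : ℕ → ℕ} (hc : IsCollapse T μ' c)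
    (hdom : Dom μ' μ) (hmax : ∀ e, T e → Dom e μ → Dom e μ') : IsCollapse T μ c :=
  ⟨hc.1, hc.2.1.trans hdom, fun e he h => hc.2.2 e he (hmax e he h)⟩

lemma IsCollapse.collapse_eq {T : (ℕ → ℕ) → Prop} {d c : ℕ → ℕ} (h : IsCollapse T d c) :
    collapse T d = c := by
  have hex : ∃ c, IsCollapse T d c := ⟨c, h⟩
  rw [collapse, dif_pos hex]
  exact Dom.antisymm (h.2.2 _ hex.choose_spec.1 hex.choose_spec.2.1)
    (hex.choose_spec.2.2 _ h.1 h.2.1)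

lemma IsPartition.exists_isCollapse_C {μ : ℕ → ℕ} (hμ : IsPartition μ) (hsz : Even (size μ)) :
    ∃ c, IsCollapse IsTypeC μ c := by
  induction h : ∑ k ∈ Finset.range (size μ + 1), psum μ k using Nat.strong_induction_on
    generalizing μ with
  | _ N ih =>
    by_cases hC : ∀ p, Odd p → Even (mult μ p)
    · exact ⟨μ, ⟨hμ, hsz, hC⟩, Dom.refl μ, fun _ _ h => h⟩
    obtain ⟨μ', hμ', hdom, ⟨k, hk, hlt⟩, hmax⟩ := hμ.exists_dom_step hsz hC
    have hdec : ∑ k ∈ Finset.range (size μ' + 1), psum μ' k < N := by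
      rw [hdom.1, ← h]
      exact Finset.sum_lt_sum (fun i _ => hdom.2 i) ⟨k, Finset.mem_range.2 (by omega), hlt⟩
    obtain ⟨c, hc⟩ := ih _ hdec hμ' (hdom.1 ▸ hsz) rfl
    exact ⟨c, hc.of_dom hdom hmax⟩

lemma isTypeC_zero : IsTypeC 0 :=
  ⟨⟨antitone_const, 0, fun _ _ => rfl⟩, by simp [size], fun p hp => by
    simp [mult, (hp.pos.ne : 0 ≠ p)]⟩

lemma numParts_zero : numParts 0 = 0 := numParts_eq fun i => by simp

lemma psum_const_zero (k : ℕ) : psum 0 k = 0 := by simp [psum]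

lemma IsPartition.exists_isCollapse_B {μ : ℕ → ℕ} (hμ : IsPartition μ) (hsz : Odd (size μ)) :
    ∃ β, IsCollapse IsTypeB μ β := by
  set H := size μ
  have hν : IsPartition (addCol H μ) := isPartition_addCol hμ
  obtain ⟨γ, hγ⟩ := hν.exists_isCollapse_C (by rw [size_addCol hμ]; exact ⟨H, rfl⟩)
  have hγ_ge : H ≤ numParts γ := by
    have := hγ.2.1.numParts_le hγ.1.1 hν
    rwa [numParts_addCol hμ hμ.numParts_le_size] at this
  -- the rectangle with `H` rows of length two is of type C and below `addCol H μ`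
  have h₀ : numParts (0 : ℕ → ℕ) ≤ H := numParts_zero ▸ H.zero_le
  have hcol : numParts (addCol H 0) = H := numParts_addCol isTypeC_zero.1 h₀
  have hcolB : IsTypeB (addCol H 0) := isTypeC_zero.isTypeB_addCol h₀ hsz
  have hρ : IsTypeC (addCol H (addCol H 0)) := hcolB.isTypeC_addCol hcol.le hsz
  have hρν : Dom (addCol H (addCol H 0)) (addCol H μ) := by
    refine (dom_addCol_iff hcolB.1 hμ).2 ⟨?_, fun k => ?_⟩
    · rw [size_addCol isTypeC_zero.1]
      simp [size, H]
    · rw [psum_addCol, psum_const_zero, zero_add]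
      exact hμ.min_le_psum k
  have hγ_le : numParts γ ≤ H :=
    numParts_addCol hcolB.1 hcol.le ▸ (hγ.2.2 _ hρ hρν).numParts_le hρ.1 hγ.1.1
  have hγH : numParts γ = H := le_antisymm hγ_le hγ_ge
  have hγβ : addCol H (delCol γ) = γ := hγH ▸ addCol_delCol hγ.1.1
  have hβ : IsPartition (delCol γ) := isPartition_delCol hγ.1.1
  refine ⟨delCol γ, hγ.1.isTypeB_delCol (hγH ▸ hsz), ?_, fun b hb hbμ => ?_⟩
  · rw [← dom_addCol_iff hβ hμ, hγβ]
    exact hγ.2.1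
  · have hbH : numParts b ≤ H := hb.1.numParts_le_size.trans_eq hbμ.1
    rw [← dom_addCol_iff hb.1 hβ, hγβ]
    exact hγ.2.2 _ (hb.isTypeC_addCol hbH hsz) ((dom_addCol_iff hb.1 hμ).2 hbμ)

section Boxes

variable {f : ℕ → ℕ}

lemma le_boxPlus (f : ℕ → ℕ) (i : ℕ) : f i ≤ boxPlus f i := by
  unfold boxPlus
  split_ifs with h <;> simp [h]

lemma isPartition_boxPlus (hf : IsPartition f) : IsPartition (boxPlus f) := by
  obtain ⟨N, hN⟩ := hf.2
  refine ⟨antitone_nat_of_succ_le fun i => ?_, N + 1, fun i hi => ?_⟩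
  · rcases Nat.eq_zero_or_pos i with rfl | hi
    · simpa [boxPlus] using (hf.1 (Nat.zero_le 1)).trans (Nat.le_succ _)
    · simpa [boxPlus, hi.ne'] using hf.1 (Nat.le_add_right i 1)
  · simp only [boxPlus, if_neg (by omega : i ≠ 0)]
    exact hN i (by omega)

lemma psum_boxPlus (f : ℕ → ℕ) (k : ℕ) : psum (boxPlus f) k = psum f k + min k 1 := by
  induction k with
  | zero => rfl
  | succ k ih =>
    rw [psum_succ, psum_succ, ih]
    rcases Nat.eq_zero_or_pos k with rfl | hk
    · simp [boxPlus, add_assoc]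
    · simp only [boxPlus, hk.ne', if_false]
      omega

lemma size_boxPlus (hf : IsPartition f) : size (boxPlus f) = size f + 1 := by
  refine (isPartition_boxPlus hf).size_add_eq_of_eventually (x := 0) hf ?_
  filter_upwards [eventually_ge_atTop 1] with k hk
  rw [psum_boxPlus]
  omega

lemma numParts_le_numParts_boxPlus (hf : IsPartition f) : numParts f ≤ numParts (boxPlus f) := by
  by_contra h
  have h₁ := hf.lt_numParts_iff.1 (not_le.1 h)
  have h₂ := (isPartition_boxPlus hf).eq_zero_of_numParts_le le_rfl
  have h₃ := le_boxPlus f (numParts (boxPlus f))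
  omega

lemma isPartition_boxMinus (hf : IsPartition f) : IsPartition (boxMinus f) := by
  obtain ⟨N, hN⟩ := hf.2
  refine ⟨antitone_nat_of_succ_le fun i => ?_, N, fun i hi => ?_⟩
  · have h₁ := hf.1 (Nat.le_add_right i 1)
    have h₂ := mt (hf.lt_numParts_iff (i := i + 1)).2
    simp only [boxMinus]
    split_ifs <;> omega
  · have := hN i hi
    simp only [boxMinus]
    split_ifs <;> omega

lemma psum_boxMinus (hf : IsPartition f) (h : 0 < numParts f) (k : ℕ) :
    psum (boxMinus f) k + (if numParts f ≤ k then 1 else 0) = psum f k := by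
  have hlast := hf.lt_numParts_iff.1 (Nat.sub_lt h one_pos)
  induction k with
  | zero => simp [psum_zero, h.ne']
  | succ k ih =>
    rw [psum_succ, psum_succ]
    simp only [boxMinus]
    split_ifs at ih ⊢ <;> subst_vars <;> omega

lemma psum_boxMinus_boxPlus_of_lt (hf : IsPartition f) {k : ℕ}
    (hk : k < numParts (boxPlus f)) : psum (boxMinus (boxPlus f)) k = psum f k + min k 1 := by
  have := psum_boxMinus (isPartition_boxPlus hf) (by omega) k
  rwa [if_neg (by omega), add_zero, psum_boxPlus] at this

lemma psum_boxMinus_boxPlus_of_le (hf : IsPartition f) {k : ℕ}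
    (hk : numParts (boxPlus f) ≤ k) : psum (boxMinus (boxPlus f)) k = psum f k := by
  have hpos : 0 < numParts (boxPlus f) :=
    (isPartition_boxPlus hf).lt_numParts_iff.2 (by simp [boxPlus])
  have := psum_boxMinus (isPartition_boxPlus hf) hpos k
  rw [if_pos hk, psum_boxPlus] at this
  omega

lemma psum_boxMinus_boxPlus_le (hf : IsPartition f) (k : ℕ) :
    psum (boxMinus (boxPlus f)) k ≤ psum f k + min k 1 := by
  rcases lt_or_ge k (numParts (boxPlus f)) with hk | hk
  · exact (psum_boxMinus_boxPlus_of_lt hf hk).le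
  · rw [psum_boxMinus_boxPlus_of_le hf hk]
    omega

lemma size_boxMinus_boxPlus (hf : IsPartition f) : size (boxMinus (boxPlus f)) = size f := by
  simpa using (isPartition_boxMinus (isPartition_boxPlus hf)).size_add_eq_of_eventually
    (x := 0) (y := 0) hf ((eventually_ge_atTop (numParts (boxPlus f))).mono fun k hk => by
      rw [psum_boxMinus_boxPlus_of_le hf hk])

end Boxes

section Main

variable {a : ℕ} {d : ℕ → ℕ}

lemma addCol_dom_boxPlus (hd : IsPartition d) (hparts : numParts d = 2 * a) {g : ℕ → ℕ}
    (hg : IsPartition g) (hgd : Dom g (boxMinus (boxPlus (delCol d)))) :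
    Dom (addCol (2 * a + 1) g) (boxPlus d) := by
  have hE := isPartition_delCol hd
  have hsize := hgd.1
  rw [size_boxMinus_boxPlus hE] at hsize
  have hsizeE := size_delCol hd
  refine ⟨by rw [size_addCol hg, size_boxPlus hd]; omega, fun k => ?_⟩
  rw [psum_addCol, psum_boxPlus]
  rcases le_or_gt k (2 * a) with hk | hk
  · have h₁ := hgd.2 k
    have h₂ := psum_boxMinus_boxPlus_le hE k
    have h₃ := psum_delCol hd k
    omega
  · have h₁ := hg.psum_le_size k
    have h₂ := hd.psum_eq_size (k := k) (by omega)
    omega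

/-- Below the last row of `(∇d)⁺` all rows of `d` have length one, while `β` has `2a + 1`
nonempty rows; this bounds the partial sums of `β` by those of `d`. -/
lemma psum_le_of_numParts_boxPlus_delCol_le (hd : IsPartition d) (hparts : numParts d = 2 * a)
    {β : ℕ → ℕ} (hβ : IsPartition β) (hsize : size β = size d + 1)
    (hβparts : numParts β = 2 * a + 1) {k : ℕ} (hk : numParts (boxPlus (delCol d)) ≤ k)
    (hka : k ≤ 2 * a) : psum β k ≤ psum d k := by
  have hone : ∀ i, k ≤ i → i < 2 * a → d i = 1 := fun i hki hi => by
    have h₁ := (isPartition_boxPlus (isPartition_delCol hd)).eq_zero_of_numParts_le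
      (hk.trans hki)
    have h₂ := le_boxPlus (delCol d) i
    have h₃ := hd.lt_numParts_iff.1 (hparts ▸ hi)
    simp only [delCol] at h₂
    omega
  have hd' := psum_add_eq_of_eq_one hka hone
  have hβ' := psum_add_le_of_one_le (f := β) (k := k) (m := 2 * a + 1) (by omega) fun i _ hi =>
    hβ.lt_numParts_iff.1 (hβparts ▸ hi)
  rw [hd.psum_eq_size hparts.le] at hd'
  rw [hβ.psum_eq_size hβparts.le] at hβ'
  omega

lemma delCol_dom_boxMinus_boxPlus (hd : IsPartition d) (hparts : numParts d = 2 * a)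
    {β : ℕ → ℕ} (hβ : IsPartition β) (hβd : Dom β (boxPlus d))
    (hβparts : numParts β = 2 * a + 1) :
    Dom (delCol β) (boxMinus (boxPlus (delCol d))) := by
  have hE := isPartition_delCol hd
  have hsize := hβd.1
  rw [size_boxPlus hd] at hsize
  have h₁ := size_delCol hβ
  have h₂ := size_delCol hd
  refine ⟨by rw [size_boxMinus_boxPlus hE]; omega, fun k => ?_⟩
  have h₃ := psum_delCol hβ k
  have h₄ := psum_delCol hd k
  rcases lt_or_ge k (numParts (boxPlus (delCol d))) with hk | hk
  · have := hβd.2 k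
    rw [psum_boxPlus] at this
    rw [psum_boxMinus_boxPlus_of_lt hE hk]
    omega
  rw [psum_boxMinus_boxPlus_of_le hE hk]
  rcases le_or_gt k (2 * a) with hka | hka
  · have := psum_le_of_numParts_boxPlus_delCol_le hd hparts hβ hsize hβparts hk hka
    omega
  · have h₅ := hβ.psum_le_size k
    have h₆ := hd.psum_eq_size (k := k) (by omega)
    omega

lemma numParts_eq_and_delCol_eq_of_isCollapse (hd : IsPartition d) (hparts : numParts d = 2 * a)
    {β g : ℕ → ℕ} (hβ : IsCollapse IsTypeB (boxPlus d) β)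
    (hg : IsCollapse IsTypeC (boxMinus (boxPlus (delCol d))) g)
    (hgparts : numParts g ≤ 2 * a + 1) :
    numParts β = 2 * a + 1 ∧ delCol β = g := by
  have hgβ : Dom (addCol (2 * a + 1) g) β := hβ.2.2 _
    (hg.1.isTypeB_addCol hgparts (odd_two_mul_add_one a))
    (addCol_dom_boxPlus hd hparts hg.1.1 hg.2.1)
  have hβparts : numParts β = 2 * a + 1 := by
    have h₁ := hgβ.numParts_le (isPartition_addCol hg.1.1) hβ.1.1
    have h₂ := hβ.2.1.numParts_le hβ.1.1 (isPartition_boxPlus hd)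
    have h₃ := numParts_le_numParts_boxPlus hd
    have h₄ := Nat.odd_iff.1 hβ.1.odd_numParts
    rw [numParts_addCol hg.1.1 hgparts] at h₁
    omega
  have hcol := addCol_delCol hβ.1.1
  rw [hβparts] at hcol
  refine ⟨hβparts, Dom.antisymm (hg.2.2 _ hβ.1.isTypeC_delCol
    (delCol_dom_boxMinus_boxPlus hd hparts hβ.1.1 hβ.2.1 hβparts)) ?_⟩
  rwa [← dom_addCol_iff hg.1.1 (isPartition_delCol hβ.1.1), hcol]

end Main

/-- for integers `a ≥ n ≥ 0` and a type-C partition `d` of size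
`2n+2a` with exactly `2a` parts: (i) `∇(d)` is a type-D partition of size `2n`;
(ii) the B-collapse of `d⁺` has exactly `2a+1` parts; (iii) `∇(B-collapse of
d⁺)` equals the C-collapse of `((∇(d))⁺)⁻`. -/
theorem stmt_14 (a n : ℕ) (han : n ≤ a) (d : ℕ → ℕ)
    (hd : IsTypeC d) (hsize : size d = 2 * n + 2 * a) (hparts : numParts d = 2 * a) :
    (IsTypeD (delCol d) ∧ size (delCol d) = 2 * n) ∧
    numParts (collapseB (boxPlus d)) = 2 * a + 1 ∧
    delCol (collapseB (boxPlus d)) = collapseC (boxMinus (boxPlus (delCol d))) := by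
  have hE := isPartition_delCol hd.1
  have hsizeE : size (delCol d) = 2 * n := by
    have := size_delCol hd.1
    omega
  obtain ⟨β, hβ⟩ := (isPartition_boxPlus hd.1).exists_isCollapse_B
    (by rw [size_boxPlus hd.1, hsize]; exact ⟨n + a, by ring⟩)
  obtain ⟨g, hg⟩ := (isPartition_boxMinus (isPartition_boxPlus hE)).exists_isCollapse_C
    (by rw [size_boxMinus_boxPlus hE, hsizeE]; exact even_two_mul n)
  have hgparts : numParts g ≤ 2 * a + 1 := by
    have := hg.1.1.numParts_le_size.trans_eq (hg.2.1.1.trans (size_boxMinus_boxPlus hE))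
    omega
  rw [collapseB, collapseC, hβ.collapse_eq, hg.collapse_eq]
  exact ⟨⟨hd.isTypeD_delCol (hparts ▸ even_two_mul a), hsizeE⟩,
    numParts_eq_and_delCol_eq_of_isCollapse hd.1 hparts hβ hg hgparts⟩
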